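/- Let {K_1, ..., K_d} be a well separated family of convex bodies in R^d, and suppose H(v_1 ≤ t_1) and H(v_2 ≤ t_2) are two distinct positive transversal halfspaces with non-parallel bounding hyperplanes. Define M = H(v_1 ≤ t_1) ∩ H(v_2 ≤ t_2) and N = H(v_1 ≥ t_1) ∩ H(v_2 ≥ t_2), and let I = {i : M ∩ int K_i ≠ ∅}, J = {j : M ∩ int K_j = ∅}. Then the sets K'_i = M ∩ K_i (i ∈ I) and K'_j = N ∩ K_j (j ∈ J) are all nonempty, and the family {K'_1, ..., K'_d} is well separated. -/

import Mathlib

open Set MeasureTheory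

/-- The `(d+1) × (d+1)` matrix whose columns are `(v, 0), (a 0, 1), …, (a (d-1), 1)`. -/
noncomputable def liftedMat (d : ℕ) (v : EuclideanSpace ℝ (Fin d))
    (a : Fin d → EuclideanSpace ℝ (Fin d)) : Matrix (Fin (d + 1)) (Fin (d + 1)) ℝ :=
  Matrix.of fun i j =>
    Fin.lastCases (Fin.cases (0 : ℝ) (fun _ => (1 : ℝ)) j)
      (fun i' => Fin.cases (v i') (fun j' => a j' i') j) i

/-- The family `K` is well separated. -/
def WellSeparated (d : ℕ) {n : ℕ} (K : Fin n → Set (EuclideanSpace ℝ (Fin d))) : Prop :=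
  ∀ s : Finset (Fin n), s.card ≤ d + 1 →
    ∀ x : Fin n → EuclideanSpace ℝ (Fin d),
      (∀ i ∈ s, x i ∈ convexHull ℝ (K i)) →
      AffineIndependent ℝ (fun i : s => x i)

/-- `H(v ≤ t)` is a positive transversal halfspace to the family `K`: `v` is a unit
vector, the bounding hyperplane `H(v = t)` meets every `K i`, and for points
`a i ∈ K i ∩ H(v = t)` the simplex `v + a 0, a 0, …, a (d-1)` is positively oriented. -/
noncomputable def PosTransversal (d : ℕ) (K : Fin d → Set (EuclideanSpace ℝ (Fin d)))
    (v : EuclideanSpace ℝ (Fin d)) (t : ℝ) : Prop :=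
  ‖v‖ = 1 ∧ ∃ a : Fin d → EuclideanSpace ℝ (Fin d),
    (∀ i, a i ∈ K i ∧ (inner ℝ (a i) v : ℝ) = t) ∧ 0 < (liftedMat d v a).det

/-! Well separation passes to subfamilies, so only nonemptiness needs an argument. If `M` misses
the interior of `K i` and neither transversal point `a i`, `b i` lies in `N`, then their midpoint
lies in `K i` and strictly inside `M`; as a convex body is the closure of its interior, the open
wedge then meets `int K i`, a contradiction. -/

theorem WellSeparated.mono {d n : ℕ} {K K' : Fin n → Set (EuclideanSpace ℝ (Fin d))}
    (hK : WellSeparated d K) (hsub : ∀ i, K' i ⊆ K i) : WellSeparated d K' :=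
  fun s hs x hx => hK s hs x fun i hi => convexHull_mono (hsub i) (hx i hi)

theorem Convex.inter_interior_nonempty_of_isOpen {E : Type*} [AddCommGroup E] [Module ℝ E]
    [TopologicalSpace E] [IsTopologicalAddGroup E] [ContinuousSMul ℝ E] {s U : Set E}
    (hs : Convex ℝ s) (hint : (interior s).Nonempty) (hU : IsOpen U) (hUs : (s ∩ U).Nonempty) :
    (interior s ∩ U).Nonempty := by
  rw [← closure_inter_open_nonempty_iff hU,
    hs.closure_interior_eq_closure_of_nonempty_interior hint]
  exact hUs.mono (inter_subset_inter_left _ subset_closure)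

theorem le_inner_or_le_inner_of_not_nonempty_wedge_inter_interior {F : Type*}
    [NormedAddCommGroup F] [InnerProductSpace ℝ F] {s : Set F} (hs : Convex ℝ s)
    (hint : (interior s).Nonempty) {v₁ v₂ a b : F} {t₁ t₂ : ℝ} (ha : a ∈ s) (hb : b ∈ s)
    (hat : inner ℝ a v₁ = t₁) (hbt : inner ℝ b v₂ = t₂)
    (hwedge : ¬({x | inner ℝ x v₁ ≤ t₁} ∩ {x | inner ℝ x v₂ ≤ t₂} ∩ interior s).Nonempty) :
    t₂ ≤ inner ℝ a v₂ ∨ t₁ ≤ inner ℝ b v₁ := by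
  by_contra! h
  set c : F := (2⁻¹ : ℝ) • a + (2⁻¹ : ℝ) • b
  have hcs : c ∈ s := hs ha hb (by norm_num) (by norm_num) (by norm_num)
  have hc : c ∈ {x | inner ℝ x v₁ < t₁} ∩ {x | inner ℝ x v₂ < t₂} := by
    simp only [c, mem_inter_iff, mem_ofPred_eq, inner_add_left, real_inner_smul_left]
    constructor <;> linarith [h.1, h.2]
  have hopen : IsOpen ({x : F | inner ℝ x v₁ < t₁} ∩ {x | inner ℝ x v₂ < t₂}) :=
    (isOpen_lt (by fun_prop) continuous_const).inter (isOpen_lt (by fun_prop) continuous_const)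
  obtain ⟨y, hys, hy₁, hy₂⟩ := hs.inter_interior_nonempty_of_isOpen hint hopen ⟨c, hcs, hc⟩
  exact hwedge ⟨y, ⟨le_of_lt (α := ℝ) hy₁, le_of_lt (α := ℝ) hy₂⟩, hys⟩

open scoped Classical in
theorem stmt19_general (d : ℕ) (K : Fin d → Set (EuclideanSpace ℝ (Fin d)))
    (hbody : ∀ i, IsCompact (K i) ∧ Convex ℝ (K i) ∧ (interior (K i)).Nonempty)
    (hws : WellSeparated d K)
    (v₁ v₂ : EuclideanSpace ℝ (Fin d)) (t₁ t₂ : ℝ)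
    (h₁ : PosTransversal d K v₁ t₁) (h₂ : PosTransversal d K v₂ t₂)
    -- `M` and `N` are the two "wedges" determined by the two halfspaces:
    (M N : Set (EuclideanSpace ℝ (Fin d)))
    (hM : M = {x | (inner ℝ x v₁ : ℝ) ≤ t₁} ∩ {x | (inner ℝ x v₂ : ℝ) ≤ t₂})
    (hN : N = {x | t₁ ≤ (inner ℝ x v₁ : ℝ)} ∩ {x | t₂ ≤ (inner ℝ x v₂ : ℝ)})
    -- `K' i` is `M ∩ K i` when `M` meets the interior of `K i`, and `N ∩ K i` otherwise:
    (K' : Fin d → Set (EuclideanSpace ℝ (Fin d)))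
    (hK' : ∀ i, K' i = if (M ∩ interior (K i)).Nonempty then M ∩ K i else N ∩ K i) :
    (∀ i, (K' i).Nonempty) ∧ WellSeparated d K' := by
  obtain ⟨-, a, ha, -⟩ := h₁
  obtain ⟨-, b, hb, -⟩ := h₂
  refine ⟨fun i => ?_, hws.mono fun i => ?_⟩
  · rw [hK' i]
    split_ifs with hMK
    · exact hMK.mono (inter_subset_inter_right _ interior_subset)
    · subst hM hN
      obtain ⟨-, hconv, hint⟩ := hbody i
      rcases le_inner_or_le_inner_of_not_nonempty_wedge_inter_interior hconv hint (ha i).1 (hb i).1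
        (ha i).2 (hb i).2 hMK with h | h
      · exact ⟨a i, ⟨(ha i).2.ge, h⟩, (ha i).1⟩
      · exact ⟨b i, ⟨h, (hb i).2.ge⟩, (hb i).1⟩
  · rw [hK' i]
    split_ifs <;> exact inter_subset_right

open scoped Classical in
theorem stmt19 (d : ℕ) (K : Fin d → Set (EuclideanSpace ℝ (Fin d)))
    (hbody : ∀ i, IsCompact (K i) ∧ Convex ℝ (K i) ∧ (interior (K i)).Nonempty)
    (hws : WellSeparated d K)
    (v₁ v₂ : EuclideanSpace ℝ (Fin d)) (t₁ t₂ : ℝ)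
    (h₁ : PosTransversal d K v₁ t₁) (h₂ : PosTransversal d K v₂ t₂)
    (hdist : (v₁, t₁) ≠ (v₂, t₂)) (hpar : v₁ ≠ v₂ ∧ v₁ ≠ -v₂)
    -- `M` and `N` are the two "wedges" determined by the two halfspaces:
    (M N : Set (EuclideanSpace ℝ (Fin d)))
    (hM : M = {x | (inner ℝ x v₁ : ℝ) ≤ t₁} ∩ {x | (inner ℝ x v₂ : ℝ) ≤ t₂})
    (hN : N = {x | t₁ ≤ (inner ℝ x v₁ : ℝ)} ∩ {x | t₂ ≤ (inner ℝ x v₂ : ℝ)})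
    -- `K' i` is `M ∩ K i` when `M` meets the interior of `K i`, and `N ∩ K i` otherwise:
    (K' : Fin d → Set (EuclideanSpace ℝ (Fin d)))
    (hK' : ∀ i, K' i = if (M ∩ interior (K i)).Nonempty then M ∩ K i else N ∩ K i) :
    (∀ i, (K' i).Nonempty) ∧ WellSeparated d K' :=
  stmt19_general d K hbody hws v₁ v₂ t₁ t₂ h₁ h₂ M N hM hN K' hK'
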